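/- arXiv:1909.02700 — 4 statements merged into one kernel-verified Lean document; each statement's English description precedes it below -/
import Mathlib

section
/- Let p be a prime, n ≥ 1 an integer, and m ≥ 1 an integer. Then the sum of k^m over all integers k with 1 ≤ k < p^n and p ∤ k is congruent modulo p^n to: -p^(n-1) if p ≥ 3 and (p-1) ∣ m; 2^(n-1) if p = 2 and 2 ∣ m and n ≥ 2; 1 if p = 2 and n = 1; and 0 otherwise. -/
open Finset


lemma aux_pow {R : Type*} [CommRing R] (a x : R) (h : x ^ 2 = 0) (m : ℕ) :
    (a + x) ^ (m + 1) = a ^ (m + 1) + (m + 1 : ℕ) * a ^ m * x := by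
  induction m with
  | zero => push_cast; ring
  | succ k ih =>
    have e : (a + x) ^ (k + 1 + 1) = (a + x) * (a + x) ^ (k + 1) := by ring
    rw [e, ih]
    push_cast
    linear_combination ((k : R) + 1) * a ^ k * h

lemma aux_reindex {M : Type*} [AddCommMonoid M] (p n : ℕ) (hp : 2 ≤ p) (hn : 2 ≤ n)
    (f : ℕ → M) :
    ∑ k ∈ (Finset.Ico 1 (p ^ n)).filter (fun k => ¬ p ∣ k), f k
      = ∑ a ∈ (Finset.Ico 1 (p ^ (n - 1))).filter (fun k => ¬ p ∣ k),
          ∑ j ∈ Finset.range p, f (a + j * p ^ (n - 1)) := by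
  rw [← Finset.sum_product']
  have hN : 0 < p ^ (n - 1) := Nat.pow_pos (by omega)
  have hpd : p ∣ p ^ (n - 1) := dvd_pow_self p (by omega)
  have hpn : p ^ (n - 1) * p = p ^ n := by
    rw [← pow_succ]; congr 1; omega
  refine Finset.sum_nbij' (fun k => (k % p ^ (n - 1), k / p ^ (n - 1)))
    (fun x => x.1 + x.2 * p ^ (n - 1)) ?_ ?_ ?_ ?_ ?_
  · intro k hk
    simp only [Finset.mem_filter, Finset.mem_Ico, Finset.mem_product, Finset.mem_range] at hk ⊢
    obtain ⟨⟨hk1, hk2⟩, hk3⟩ := hk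
    have hdm : ¬ p ∣ k % p ^ (n - 1) := by
      rw [Nat.dvd_mod_iff hpd]; exact hk3
    refine ⟨⟨⟨?_, Nat.mod_lt _ hN⟩, hdm⟩, ?_⟩
    · rcases Nat.eq_zero_or_pos (k % p ^ (n - 1)) with h0 | h0
      · exact absurd (h0 ▸ dvd_zero p) hdm
      · exact h0
    · rw [Nat.div_lt_iff_lt_mul hN]; rw [mul_comm, hpn]; exact hk2
  · intro x hx
    simp only [Finset.mem_filter, Finset.mem_Ico, Finset.mem_product, Finset.mem_range] at hx ⊢
    obtain ⟨⟨⟨h1, h2⟩, h3⟩, h4⟩ := hx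
    constructor
    · constructor
      · omega
      · calc x.1 + x.2 * p ^ (n - 1) < (x.2 + 1) * p ^ (n - 1) := by nlinarith
          _ ≤ p * p ^ (n - 1) := Nat.mul_le_mul_right _ (by omega)
          _ = p ^ n := by rw [mul_comm, hpn]
    · intro hd
      exact h3 ((Nat.dvd_add_right (hpd.mul_left x.2)).mp (by rwa [add_comm] at hd))
  · intro k _; exact Nat.mod_add_div' k _
  · intro x hx
    simp only [Finset.mem_filter, Finset.mem_Ico, Finset.mem_product, Finset.mem_range] at hx
    obtain ⟨⟨⟨h1, h2⟩, h3⟩, h4⟩ := hx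
    simp [Nat.add_mul_mod_self_right, Nat.mod_eq_of_lt h2, Nat.add_mul_div_right _ _ hN,
      Nat.div_eq_of_lt h2]
  · intro k _
    simp [Nat.mod_add_div' k (p ^ (n - 1))]


lemma aux_filter_one (p : ℕ) (hp : 2 ≤ p) :
    (Finset.Ico 1 (p ^ 1)).filter (fun k => ¬ p ∣ k) = Finset.Ico 1 p := by
  rw [pow_one]
  apply Finset.filter_true_of_mem
  intro k hk hd
  rw [Finset.mem_Ico] at hk
  have := Nat.eq_zero_of_dvd_of_lt hd hk.2
  omega

lemma aux_base (p : ℕ) (hp : p.Prime) (m : ℕ) (hm : 1 ≤ m) :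
    (∑ k ∈ (Finset.Ico 1 (p ^ 1)).filter (fun k => ¬ p ∣ k), (k : ℤ) ^ m) ≡
      (if (p - 1) ∣ m then -1 else 0) [ZMOD (p : ℕ)] := by
  haveI := Fact.mk hp
  rw [aux_filter_one p hp.two_le, ← ZMod.intCast_eq_intCast_iff]
  push_cast
  have h1 : ∑ k ∈ Finset.Ico 1 p, (k : ZMod p) ^ m = ∑ x : ZMod p, x ^ m := by
    have h2 : ∑ k ∈ Finset.range p, (k : ZMod p) ^ m = ∑ x : ZMod p, x ^ m := by
      refine Finset.sum_nbij' (fun k => (k : ZMod p)) (fun x => x.val) ?_ ?_ ?_ ?_ ?_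
      · intro a _; exact Finset.mem_univ _
      · intro x _; exact Finset.mem_range.mpr (ZMod.val_lt x)
      · intro a ha; exact ZMod.val_cast_of_lt (Finset.mem_range.mp ha)
      · intro x _; exact ZMod.natCast_rightInverse x
      · intro a _; rfl
    rw [← h2, Finset.range_eq_Ico, Finset.sum_eq_sum_Ico_succ_bot hp.pos]
    simp [zero_pow (by omega : m ≠ 0)]
  rw [h1]
  have h3 : ∑ x : ZMod p, x ^ m = ∑ x : (ZMod p)ˣ, (x : ZMod p) ^ m := by
    let φ : (ZMod p)ˣ ↪ ZMod p := ⟨fun x => x, fun _ _ h => Units.ext h⟩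
    have hmap : Finset.univ.map φ = Finset.univ \ {0} := by
      ext x
      simp only [Finset.mem_map, Finset.mem_univ, Function.Embedding.coeFn_mk, true_and,
        Finset.mem_sdiff, Finset.mem_singleton, φ]
      exact
        (show (∃ a : (ZMod p)ˣ, (a : ZMod p) = x) ↔ ¬ x = 0 from isUnit_iff_ne_zero)
    rw [eq_comm, show ∑ x : (ZMod p)ˣ, (x : ZMod p) ^ m = ∑ x ∈ Finset.univ.map φ, x ^ m from
      (Finset.sum_map Finset.univ φ (fun x => x ^ m)).symm, hmap]
    rw [Finset.sum_sdiff_eq_sub (Finset.subset_univ _)]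
    simp [zero_pow (by omega : m ≠ 0)]
  rw [h3]
  have h4 := FiniteField.sum_pow_units (ZMod p) m
  rw [ZMod.card p] at h4
  rw [h4]



lemma aux_card (p n : ℕ) (hp : 2 ≤ p) (hn : 1 ≤ n) :
    ((Finset.Ico 1 (p ^ n)).filter (fun k => ¬ p ∣ k)).card = p ^ (n - 1) * (p - 1) := by
  induction n, hn using Nat.le_induction with
  | base => rw [aux_filter_one p hp]; simp
  | succ n hn ih =>
    have h := aux_reindex (M := ℕ) p (n + 1) hp (by omega) (fun _ => 1)
    simp only [Nat.add_sub_cancel, Finset.sum_const, smul_eq_mul, mul_one,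
      Finset.card_range] at h
    rw [h, ih, show n + 1 - 1 = (n - 1) + 1 by omega, pow_succ]
    ring

lemma aux_step (p : ℕ) (hp : p.Prime) (n m : ℕ) (hn : 2 ≤ n) (hm : 1 ≤ m) :
    (∑ k ∈ (Finset.Ico 1 (p ^ n)).filter (fun k => ¬ p ∣ k), (k : ℤ) ^ m) ≡
      ((p : ℤ) * (∑ k ∈ (Finset.Ico 1 (p ^ (n - 1))).filter (fun k => ¬ p ∣ k), (k : ℤ) ^ m)
      + (m : ℤ) * (∑ j ∈ Finset.range p, (j : ℤ)) * (p : ℤ) ^ (n - 1)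
          * (∑ k ∈ (Finset.Ico 1 (p ^ (n - 1))).filter (fun k => ¬ p ∣ k), (k : ℤ) ^ (m - 1)))
      [ZMOD (p ^ n : ℕ)] := by
  obtain ⟨m', rfl⟩ : ∃ m', m = m' + 1 := ⟨m - 1, by omega⟩
  haveI : NeZero (p ^ n) := ⟨pow_ne_zero _ hp.pos.ne'⟩
  rw [← ZMod.intCast_eq_intCast_iff]
  push_cast
  set R := ZMod (p ^ n) with hR
  set F := (Finset.Ico 1 (p ^ (n - 1))).filter (fun k => ¬ p ∣ k) with hF
  set G := ∑ j ∈ Finset.range p, (j : R) with hG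
  have hx2 : ((p : R) ^ (n - 1)) ^ 2 = 0 := by
    have h0 : ((p ^ (n - 1) * p ^ (n - 1) : ℕ) : R) = 0 := by
      rw [ZMod.natCast_eq_zero_iff, ← pow_add]
      exact pow_dvd_pow p (by omega)
    push_cast +zetaDelta at h0
    rw [sq]; exact h0
  have hterm : ∀ a ∈ F, ∑ j ∈ Finset.range p, (((a + j * p ^ (n - 1) : ℕ) : R)) ^ (m' + 1)
      = (p : R) * (a : R) ^ (m' + 1) + (((m' : R) + 1) * (a : R) ^ m' * (p : R) ^ (n - 1)) * G := by
    intro a _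
    calc ∑ j ∈ Finset.range p, (((a + j * p ^ (n - 1) : ℕ) : R)) ^ (m' + 1)
        = ∑ j ∈ Finset.range p,
            ((a : R) ^ (m' + 1) + (((m' : R) + 1) * (a : R) ^ m' * (p : R) ^ (n - 1)) * (j : R)) := by
          refine Finset.sum_congr rfl fun j _ => ?_
          push_cast +zetaDelta
          rw [aux_pow ((a : ℕ) : R) ((j : R) * (p : R) ^ (n - 1))
            (by rw [mul_pow, hx2, mul_zero]) m']
          push_cast +zetaDelta
          ring
      _ = (p : R) * (a : R) ^ (m' + 1)
            + (((m' : R) + 1) * (a : R) ^ m' * (p : R) ^ (n - 1)) * G := by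
          rw [Finset.sum_add_distrib, Finset.sum_const, Finset.card_range, ← Finset.mul_sum,
            nsmul_eq_mul (α := ZMod (p ^ n)), hG]
  rw [aux_reindex p n hp.two_le hn (fun k => ((k : ℕ) : R) ^ (m' + 1)), Finset.sum_congr rfl hterm,
    Finset.sum_add_distrib, ← Finset.mul_sum]
  have h2 : ∑ a ∈ F, (((m' : R) + 1) * (a : R) ^ m' * (p : R) ^ (n - 1)) * G
      = ((m' : R) + 1) * G * (p : R) ^ (n - 1) * ∑ a ∈ F, (a : R) ^ m' := by
    rw [Finset.mul_sum]
    exact Finset.sum_congr rfl fun a _ => by ring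
  rw [h2]


lemma aux_G_odd (p : ℕ) (hp : p.Prime) (hp2 : p ≠ 2) :
    (p : ℤ) ∣ ∑ j ∈ Finset.range p, (j : ℤ) := by
  have h := Finset.sum_range_id_mul_two p
  have hodd : p % 2 = 1 := Nat.odd_iff.mp (hp.odd_of_ne_two hp2)
  obtain ⟨t, ht⟩ : 2 ∣ p - 1 := by omega
  have h2 : (∑ i ∈ Finset.range p, i) = p * t := by
    have : (∑ i ∈ Finset.range p, i) * 2 = (p * t) * 2 := by rw [h, ht]; ring
    omega
  refine ⟨(t : ℤ), ?_⟩
  have : (∑ j ∈ Finset.range p, (j : ℤ)) = ((∑ i ∈ Finset.range p, i : ℕ) : ℤ) := by push_cast; rfl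
  rw [this, h2]; push_cast; ring

lemma aux_parity (n t : ℕ) (hn : 1 ≤ n) :
    (∑ k ∈ (Finset.Ico 1 ((2:ℕ) ^ n)).filter (fun k => ¬ 2 ∣ k), (k : ℤ) ^ t) ≡
      (2 : ℤ) ^ (n - 1) [ZMOD ((2 : ℕ) : ℤ)] := by
  rw [← ZMod.intCast_eq_intCast_iff]
  simp only [Int.cast_sum, Int.cast_pow, Int.cast_natCast, Int.cast_ofNat]
  have hone : ∀ k ∈ (Finset.Ico 1 (2 ^ n)).filter (fun k => ¬ 2 ∣ k),
      ((k : ℕ) : ZMod 2) ^ t = 1 := by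
    intro k hk
    simp only [Finset.mem_filter] at hk
    have hk2 : k % 2 = 1 := by omega
    rw [← ZMod.natCast_mod, hk2, Nat.cast_one, one_pow]
  rw [Finset.sum_congr rfl hone, Finset.sum_const, aux_card 2 n (le_refl 2) hn, nsmul_eq_mul,
    mul_one]
  push_cast
  ring


/-- The sum of `k ^ m` over integers `1 ≤ k < p ^ n` with `p ∤ k`, modulo `p ^ n`. -/
theorem stmt1 (p : ℕ) (hp : p.Prime) (n m : ℕ) (hn : 1 ≤ n) (hm : 1 ≤ m) :
    (∑ k ∈ (Finset.Ico 1 (p ^ n)).filter (fun k => ¬ p ∣ k), (k : ℤ) ^ m) ≡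
      (if 3 ≤ p ∧ (p - 1) ∣ m then -(p : ℤ) ^ (n - 1)
       else if p = 2 ∧ 2 ∣ m ∧ 2 ≤ n then 2 ^ (n - 1)
       else if p = 2 ∧ n = 1 then 1
       else 0) [ZMOD (p ^ n)] := by
  induction n, hn using Nat.le_induction with
  | base =>
    have hb := aux_base p hp m hm
    have hmod : ((p : ℤ)) ^ 1 = ((p : ℕ) : ℤ) := by push_cast; ring
    rw [hmod]
    rcases eq_or_ne p 2 with rfl | hp2
    · have htgt : (if 3 ≤ 2 ∧ (2 - 1) ∣ m then -(((2:ℕ)):ℤ) ^ (1 - 1)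
          else if (2:ℕ) = 2 ∧ 2 ∣ m ∧ 2 ≤ 1 then (2:ℤ) ^ (1 - 1)
          else if (2:ℕ) = 2 ∧ 1 = 1 then 1 else (0:ℤ)) = 1 := by norm_num
      rw [htgt]
      refine hb.trans ?_
      have h1 : (if (2 - 1) ∣ m then (-1:ℤ) else 0) = -1 := by norm_num
      rw [h1]
      decide
    · have h3 : 3 ≤ p := by have := hp.two_le; omega
      have htgt : (if 3 ≤ p ∧ (p - 1) ∣ m then -(p : ℤ) ^ (1 - 1)
          else if p = 2 ∧ 2 ∣ m ∧ 2 ≤ 1 then (2:ℤ) ^ (1 - 1)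
          else if p = 2 ∧ 1 = 1 then 1 else (0:ℤ))
          = (if (p - 1) ∣ m then -1 else 0) := by
        simp [h3, hp2]
      rw [htgt]
      exact hb
  | succ n hn ih =>
    have hstep := aux_step p hp (n + 1) m (by omega) hm
    simp only [Nat.add_sub_cancel] at hstep
    set Sn := ∑ k ∈ (Finset.Ico 1 (p ^ n)).filter (fun k => ¬ p ∣ k), (k : ℤ) ^ m with hSn
    set T := ∑ k ∈ (Finset.Ico 1 (p ^ n)).filter (fun k => ¬ p ∣ k), (k : ℤ) ^ (m - 1) with hTd
    set G := ∑ j ∈ Finset.range p, (j : ℤ) with hGd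
    set c : ℤ := (if 3 ≤ p ∧ (p - 1) ∣ m then -(p : ℤ) ^ (n - 1)
       else if p = 2 ∧ 2 ∣ m ∧ 2 ≤ n then 2 ^ (n - 1)
       else if p = 2 ∧ n = 1 then 1 else 0) with hcd
    have hmod : ((p:ℤ)) ^ (n+1) = ((p ^ (n+1) : ℕ) : ℤ) := by push_cast; ring
    have hmod2 : ((p ^ (n+1) : ℕ) : ℤ) = (p : ℤ) * ((p:ℤ)) ^ n := by push_cast [pow_succ]; ring
    rw [hmod]
    have h1 : (p : ℤ) * Sn ≡ (p : ℤ) * c [ZMOD ((p ^ (n+1) : ℕ) : ℤ)] := by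
      rw [hmod2]
      exact ih.mul_left'
    rcases eq_or_ne p 2 with rfl | hp2
    · -- p = 2
      have hG1 : G = 1 := by rw [hGd]; decide
      have hT := aux_parity n (m - 1) hn
      rw [← hTd] at hT
      have hm2 : ((2:ℕ):ℤ)^n * T ≡ ((2:ℕ):ℤ)^n * (2:ℤ)^(n-1)
          [ZMOD (((2:ℕ):ℤ))^n * ((2:ℕ):ℤ)] := hT.mul_left'
      have he : ((2 ^ (n+1) : ℕ) : ℤ) = ((2:ℕ):ℤ)^n * ((2:ℕ):ℤ) := by push_cast [pow_succ]; ring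
      have h2 : (m : ℤ) * G * ((2:ℕ):ℤ) ^ n * T ≡ (m:ℤ) * (((2:ℕ):ℤ)^n * (2:ℤ)^(n-1))
          [ZMOD ((2^(n+1):ℕ):ℤ)] := by
        rw [he, hG1, mul_one]
        calc (m:ℤ) * ((2:ℕ):ℤ)^n * T = (m:ℤ) * (((2:ℕ):ℤ)^n * T) := by ring
          _ ≡ (m:ℤ) * (((2:ℕ):ℤ)^n * (2:ℤ)^(n-1)) [ZMOD (((2:ℕ):ℤ))^n * ((2:ℕ):ℤ)] :=
              hm2.mul_left _
      refine hstep.trans ((h1.add h2).trans ?_)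
      have hncond1 : ¬((3:ℕ) ≤ 2 ∧ (2 - 1) ∣ m) := fun h => absurd h.1 (by omega)
      rcases Nat.even_or_odd m with hme | hmo
      · -- m even
        obtain ⟨m₁, rfl⟩ := hme
        have hdm : (2:ℕ) ∣ m₁ + m₁ := ⟨m₁, by ring⟩
        have hcv : c = (if 2 ≤ n then (2:ℤ) ^ (n - 1) else 1) := by
          rw [hcd, if_neg hncond1]
          by_cases h2n : 2 ≤ n
          · rw [if_pos ⟨rfl, hdm, h2n⟩, if_pos h2n]
          · rw [if_neg (fun h => h2n h.2.2), if_neg h2n, if_pos ⟨rfl, by omega⟩]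
        rw [if_neg hncond1, if_pos ⟨rfl, hdm, (by omega : 2 ≤ n + 1)⟩, hcv]
        have h0 : (↑(m₁ + m₁) : ℤ) * (((2:ℕ):ℤ)^n * (2:ℤ)^(n-1)) ≡ 0
            [ZMOD ((2^(n+1) : ℕ) : ℤ)] := by
          rw [Int.modEq_zero_iff_dvd]
          exact ⟨(m₁ : ℤ) * 2^(n-1), by push_cast [pow_succ]; ring⟩
        refine ((Int.ModEq.refl _).add h0).trans ?_
        obtain ⟨k, rfl⟩ : ∃ k, n = k + 1 := ⟨n - 1, by omega⟩
        have hfin : ((2:ℕ):ℤ) * (if 2 ≤ k + 1 then (2:ℤ) ^ (k + 1 - 1) else 1) + 0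
            = (2:ℤ) ^ (k + 1 + 1 - 1) := by
          by_cases h2n : 2 ≤ k + 1
          · rw [if_pos h2n]; push_cast; ring
          · rw [if_neg h2n, show k = 0 by omega]; norm_num
        rw [hfin]
      · -- m odd
        obtain ⟨m₁, rfl⟩ := hmo
        have hnd : ¬ (2:ℕ) ∣ 2 * m₁ + 1 := by omega
        have hncond2 : ¬((2:ℕ) = 2 ∧ 2 ∣ 2 * m₁ + 1 ∧ 2 ≤ n) := fun h => hnd h.2.1
        have hncond2' : ¬((2:ℕ) = 2 ∧ 2 ∣ 2 * m₁ + 1 ∧ 2 ≤ n + 1) := fun h => hnd h.2.1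
        rw [if_neg hncond1, if_neg hncond2',
          if_neg (fun h => by omega : ¬((2:ℕ) = 2 ∧ n + 1 = 1))]
        have hcv : c = (if n = 1 then 1 else 0) := by
          rw [hcd, if_neg hncond1, if_neg hncond2]
          by_cases hn1 : n = 1
          · rw [if_pos ⟨rfl, hn1⟩, if_pos hn1]
          · rw [if_neg (fun h => hn1 h.2), if_neg hn1]
        rw [hcv]
        by_cases hn1 : n = 1
        · subst hn1
          rw [if_pos rfl, Int.modEq_zero_iff_dvd]
          exact ⟨(m₁ : ℤ) + 1, by push_cast; ring⟩
        · have h2n : 2 ≤ n := by omega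
          rw [if_neg hn1, Int.modEq_zero_iff_dvd]
          obtain ⟨k, rfl⟩ : ∃ k, n = k + 2 := ⟨n - 2, by omega⟩
          refine ⟨(2 * (m₁:ℤ) + 1) * 2^k, ?_⟩
          push_cast
          ring
    · -- p odd
      have h3 : 3 ≤ p := by have := hp.two_le; omega
      obtain ⟨t, ht⟩ := aux_G_odd p hp hp2
      have h2 : (m : ℤ) * G * (p:ℤ) ^ n * T ≡ 0 [ZMOD ((p ^ (n+1) : ℕ) : ℤ)] := by
        rw [Int.modEq_zero_iff_dvd, hmod2, hGd, ht]
        exact ⟨(m:ℤ) * t * T, by push_cast; ring⟩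
      refine hstep.trans ((h1.add h2).trans ?_)
      rw [add_zero]
      have hpc : (p:ℤ) * c = (if 3 ≤ p ∧ (p - 1) ∣ m then -(p : ℤ) ^ (n + 1 - 1)
          else if p = 2 ∧ 2 ∣ m ∧ 2 ≤ n + 1 then 2 ^ (n + 1 - 1)
          else if p = 2 ∧ n + 1 = 1 then 1 else 0) := by
        rw [hcd]
        by_cases hd : (p - 1) ∣ m
        · simp only [h3, hd, and_self, if_true, true_and, hp2, false_and, if_false]
          rw [show n + 1 - 1 = (n - 1) + 1 by omega, pow_succ]
          ring
        · simp [h3, hd, hp2]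
      rw [hpc]
end

section
/- Let N, M ≥ 1 be positive integers. Define a sequence of quadruples (A_i, B_i, C_i, D_i) of nonnegative integers by (A_0,B_0,C_0,D_0) = (0,0,1,1) and, setting c_i = C_i·N − A_i·M and d_i = D_i·M − B_i·N: if c_i ≤ d_i then (A_{i+1},B_{i+1},C_{i+1},D_{i+1}) = (A_i, B_i+C_i, C_i, A_i+D_i), and if c_i > d_i then (A_{i+1},B_{i+1},C_{i+1},D_{i+1}) = (A_i+D_i, B_i, B_i+C_i, D_i). Then for all i, the quantities a_i := A_i·M, b_i := B_i·N, c_i and d_i are all nonnegative integers. -/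
/-- One step of the Euclidean-type recursion on quadruples `(A, B, C, D)`:
with `c = C·N − A·M` and `d = D·M − B·N`, map to `(A, B+C, C, A+D)` if `c ≤ d`,
and to `(A+D, B, B+C, D)` otherwise. -/
def quadStep (N M : ℤ) (q : ℤ × ℤ × ℤ × ℤ) : ℤ × ℤ × ℤ × ℤ :=
  if q.2.2.1 * N - q.1 * M ≤ q.2.2.2 * M - q.2.1 * N then
    (q.1, q.2.1 + q.2.2.1, q.2.2.1, q.1 + q.2.2.2)
  else
    (q.1 + q.2.2.2, q.2.1, q.2.1 + q.2.2.1, q.2.2.2)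

/-- The sequence of quadruples starting from `(0, 0, 1, 1)`. -/
def quadSeq (N M : ℤ) : ℕ → ℤ × ℤ × ℤ × ℤ
  | 0 => (0, 0, 1, 1)
  | i + 1 => quadStep N M (quadSeq N M i)

/-- Invariant of the recursion: all of `A_i, B_i, C_i, D_i` and
`a_i = A_i·M`, `b_i = B_i·N`, `c_i = C_i·N − A_i·M`, `d_i = D_i·M − B_i·N`
are nonnegative integers. -/
theorem stmt7 (N M : ℤ) (hN : 1 ≤ N) (hM : 1 ≤ M) (i : ℕ) :
    0 ≤ (quadSeq N M i).1 ∧ 0 ≤ (quadSeq N M i).2.1 ∧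
    0 ≤ (quadSeq N M i).2.2.1 ∧ 0 ≤ (quadSeq N M i).2.2.2 ∧
    0 ≤ (quadSeq N M i).1 * M ∧ 0 ≤ (quadSeq N M i).2.1 * N ∧
    0 ≤ (quadSeq N M i).2.2.1 * N - (quadSeq N M i).1 * M ∧
    0 ≤ (quadSeq N M i).2.2.2 * M - (quadSeq N M i).2.1 * N := by
  induction i with
  | zero => simp [quadSeq]; constructor <;> linarith
  | succ i ih =>
    obtain ⟨hA, hB, hC, hD, ha, hb, hc, hd⟩ := ih
    show _ ∧ _
    simp only [quadSeq, quadStep]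
    rcases hq : quadSeq N M i with ⟨A, B, C, D⟩
    rw [hq] at hA hB hC hD ha hb hc hd
    simp only at hA hB hC hD ha hb hc hd ⊢
    split <;> rename_i h <;> dsimp only <;>
      refine ⟨by linarith, by linarith, by linarith, by linarith, ?_, ?_, ?_, ?_⟩ <;>
      nlinarith
end

section
/- Let N, M ≥ 1 and define (A_i, B_i, C_i, D_i) as in the Euclidean-type recursion with (A_0,B_0,C_0,D_0) = (0,0,1,1), c_i = C_iN − A_iM, d_i = D_iM − B_iN, branching on c_i ≤ d_i versus c_i > d_i. Let n be minimal with c_n·d_n = 0 (such n exists). Then the sequences A_i, B_i, C_i, D_i are non-decreasing in i, and A_n ≤ N, D_n ≤ N, B_n ≤ M, C_n ≤ M. -/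
/-- `c_i = C_i·N − A_i·M` of the recursion. -/
def cSeq (N M : ℤ) (i : ℕ) : ℤ := (quadSeq N M i).2.2.1 * N - (quadSeq N M i).1 * M

/-- `d_i = D_i·M − B_i·N` of the recursion. -/
def dSeq (N M : ℤ) (i : ℕ) : ℤ := (quadSeq N M i).2.2.2 * M - (quadSeq N M i).2.1 * N

lemma quad_nonneg (N M : ℤ) (i : ℕ) :
    0 ≤ (quadSeq N M i).1 ∧ 0 ≤ (quadSeq N M i).2.1 ∧
    0 ≤ (quadSeq N M i).2.2.1 ∧ 0 ≤ (quadSeq N M i).2.2.2 := by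
  induction i with
  | zero => simp [quadSeq]
  | succ i ih =>
    obtain ⟨h1, h2, h3, h4⟩ := ih
    simp only [quadSeq, quadStep]
    split_ifs <;> dsimp only <;>
      exact ⟨by linarith, by linarith, by linarith, by linarith⟩

lemma cd_step_pos (N M : ℤ) (i : ℕ) (h : cSeq N M i ≤ dSeq N M i) :
    cSeq N M (i + 1) = cSeq N M i ∧ dSeq N M (i + 1) = dSeq N M i - cSeq N M i := by
  simp only [cSeq, dSeq] at h ⊢
  simp only [quadSeq, quadStep]
  rw [if_pos h]
  dsimp only
  constructor <;> ring

lemma cd_step_neg (N M : ℤ) (i : ℕ) (h : ¬ cSeq N M i ≤ dSeq N M i) :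
    cSeq N M (i + 1) = cSeq N M i - dSeq N M i ∧ dSeq N M (i + 1) = dSeq N M i := by
  simp only [cSeq, dSeq] at h ⊢
  simp only [quadSeq, quadStep]
  rw [if_neg h]
  dsimp only
  constructor <;> ring

lemma cd_nonneg (N M : ℤ) (hN : 1 ≤ N) (hM : 1 ≤ M) (i : ℕ) :
    0 ≤ cSeq N M i ∧ 0 ≤ dSeq N M i := by
  induction i with
  | zero =>
    simp only [cSeq, dSeq, quadSeq]
    constructor <;> linarith
  | succ i ih =>
    obtain ⟨h1, h2⟩ := ih
    by_cases h : cSeq N M i ≤ dSeq N M i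
    · obtain ⟨e1, e2⟩ := cd_step_pos N M i h; constructor <;> linarith
    · obtain ⟨e1, e2⟩ := cd_step_neg N M i h; constructor <;> linarith

lemma quad_invariant (N M : ℤ) (i : ℕ) :
    (quadSeq N M i).1 * dSeq N M i + (quadSeq N M i).2.2.2 * cSeq N M i = N ∧
    (quadSeq N M i).2.1 * cSeq N M i + (quadSeq N M i).2.2.1 * dSeq N M i = M := by
  induction i with
  | zero => simp [quadSeq, cSeq, dSeq]
  | succ i ih =>
    obtain ⟨h1, h2⟩ := ih
    simp only [cSeq, dSeq, quadSeq, quadStep] at h1 h2 ⊢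
    split_ifs <;> dsimp only <;> constructor
    · linear_combination h1
    · linear_combination h2
    · linear_combination h1
    · linear_combination h2

lemma cd_terminates (N M : ℤ) (hN : 1 ≤ N) (hM : 1 ≤ M) :
    ∃ n : ℕ, cSeq N M n * dSeq N M n = 0 := by
  suffices h : ∀ k : ℕ, ∀ i : ℕ, cSeq N M i + dSeq N M i ≤ (k : ℤ) →
      ∃ n : ℕ, cSeq N M n * dSeq N M n = 0 by
    refine h (cSeq N M 0 + dSeq N M 0).toNat 0 ?_
    rw [Int.toNat_of_nonneg]
    obtain ⟨a, b⟩ := cd_nonneg N M hN hM 0; linarith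
  intro k
  induction k with
  | zero =>
    intro i hi
    obtain ⟨a, b⟩ := cd_nonneg N M hN hM i
    push_cast at hi
    have hc : cSeq N M i = 0 := by linarith
    exact ⟨i, by rw [hc]; ring⟩
  | succ k ih =>
    intro i hi
    by_cases h0 : cSeq N M i * dSeq N M i = 0
    · exact ⟨i, h0⟩
    · obtain ⟨a, b⟩ := cd_nonneg N M hN hM i
      have ha : 1 ≤ cSeq N M i := by
        rcases lt_or_eq_of_le a with h | h
        · linarith
        · exact absurd (by rw [← h]; ring) h0
      have hb : 1 ≤ dSeq N M i := by
        rcases lt_or_eq_of_le b with h | h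
        · linarith
        · exact absurd (by rw [← h]; ring) h0
      apply ih (i + 1)
      by_cases h : cSeq N M i ≤ dSeq N M i
      · obtain ⟨e1, e2⟩ := cd_step_pos N M i h; push_cast at hi ⊢; linarith
      · obtain ⟨e1, e2⟩ := cd_step_neg N M i h; push_cast at hi ⊢; linarith

/-- There is a minimal `n` with `c_n·d_n = 0`; the sequences `A_i, B_i, C_i, D_i` are
non-decreasing; and at this `n` one has `A_n ≤ N`, `D_n ≤ N`, `B_n ≤ M`, `C_n ≤ M`. -/
theorem stmt8 (N M : ℤ) (hN : 1 ≤ N) (hM : 1 ≤ M) :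
    (∀ i : ℕ,
      (quadSeq N M i).1 ≤ (quadSeq N M (i + 1)).1 ∧
      (quadSeq N M i).2.1 ≤ (quadSeq N M (i + 1)).2.1 ∧
      (quadSeq N M i).2.2.1 ≤ (quadSeq N M (i + 1)).2.2.1 ∧
      (quadSeq N M i).2.2.2 ≤ (quadSeq N M (i + 1)).2.2.2) ∧
    ∃ n : ℕ, cSeq N M n * dSeq N M n = 0 ∧
      (∀ m < n, cSeq N M m * dSeq N M m ≠ 0) ∧
      (quadSeq N M n).1 ≤ N ∧ (quadSeq N M n).2.2.2 ≤ N ∧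
      (quadSeq N M n).2.1 ≤ M ∧ (quadSeq N M n).2.2.1 ≤ M := by
  constructor
  · intro i
    obtain ⟨h1, h2, h3, h4⟩ := quad_nonneg N M i
    simp only [quadSeq, quadStep]
    split_ifs <;> dsimp only <;>
      exact ⟨by linarith, by linarith, by linarith, by linarith⟩
  · have hex := cd_terminates N M hN hM
    classical
    refine ⟨Nat.find hex, Nat.find_spec hex, fun m hm => Nat.find_min hex hm, ?_⟩
    rcases Nat.eq_zero_or_pos (Nat.find hex) with h0 | hpos
    · rw [h0]; refine ⟨?_, ?_, ?_, ?_⟩ <;> simp [quadSeq] <;> linarith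
    · obtain ⟨i, hni⟩ : ∃ i, Nat.find hex = i + 1 :=
        ⟨Nat.find hex - 1, by omega⟩
      have hne : cSeq N M i * dSeq N M i ≠ 0 := Nat.find_min hex (by omega)
      obtain ⟨a, b⟩ := cd_nonneg N M hN hM i
      have ha : 1 ≤ cSeq N M i := by
        rcases lt_or_eq_of_le a with h | h
        · linarith
        · exact absurd (by rw [← h]; ring) hne
      have hb : 1 ≤ dSeq N M i := by
        rcases lt_or_eq_of_le b with h | h
        · linarith
        · exact absurd (by rw [← h]; ring) hne
      obtain ⟨h1, h2, h3, h4⟩ := quad_nonneg N M i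
      obtain ⟨e1, e2⟩ := quad_invariant N M i
      have p1 := mul_nonneg h1 (by linarith : (0:ℤ) ≤ dSeq N M i - 1)
      have p2 := mul_nonneg h4 (by linarith : (0:ℤ) ≤ cSeq N M i - 1)
      have p3 := mul_nonneg h2 (by linarith : (0:ℤ) ≤ cSeq N M i - 1)
      have p4 := mul_nonneg h3 (by linarith : (0:ℤ) ≤ dSeq N M i - 1)
      have p5 := mul_nonneg h1 b
      have p6 := mul_nonneg h4 a
      have p7 := mul_nonneg h2 a
      have p8 := mul_nonneg h3 b
      simp only [cSeq, dSeq] at e1 e2 p1 p2 p3 p4 p5 p6 p7 p8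
      rw [hni]
      simp only [quadSeq, quadStep]
      split_ifs <;> dsimp only <;>
        exact ⟨by linarith, by linarith, by linarith, by linarith⟩
end

section
/- Assuming the Dwork congruence 𝓕(t) ≡ F_a(t)_{<p^n} / [F_{a'}(t^p)]_{<p^n} mod p^n ℤ_p[[t]] for all n ≥ 1, one has F_a(t)_{<p^n} ≡ F_a(t)_{<p} · (F_{a'}(t)_{<p})^p · (F_{a''}(t)_{<p})^{p^2} ⋯ (F_{a^{(n−1)}}(t)_{<p})^{p^{n−1}} mod p ℤ_p[[t]]. -/
open PowerSeries

/-- Assuming the Dwork congruence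
`𝓕(t)·[F_{a'}(t^p)]_{<p^n} ≡ F_a(t)_{<p^n} mod p^n`, one has
`F_a(t)_{<p^n} ≡ ∏_{i<n} (F_{a^{(i)}}(t)_{<p})^{p^i} mod p`.
Here `d` is the Dwork-prime map, `F a` the hypergeometric series with parameter
tuple `a`, `Fp a` the series `F_{a'}(t^p)`, and `Phi a = F_a(t)/F_{a'}(t^p)` is
Dwork's `p`-adic hypergeometric function. -/
theorem stmt11 (p : ℕ) [Fact p.Prime] (s : ℕ) (hs : 2 ≤ s)
    (d : ℤ_[p] → ℤ_[p])
    (hd : ∀ α, ∃ k : ℕ, k < p ∧ α + (k : ℤ_[p]) = (p : ℤ_[p]) * d α)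
    (F : (Fin s → ℤ_[p]) → PowerSeries ℤ_[p])
    (hF : ∀ a n, ((n.factorial : ℤ_[p]) ^ s) * PowerSeries.coeff n (F a)
        = ∏ i, (ascPochhammer ℤ_[p] n).eval (a i))
    (Fp : (Fin s → ℤ_[p]) → PowerSeries ℤ_[p])
    (hFp : ∀ a k, PowerSeries.coeff k (Fp a)
        = if p ∣ k then PowerSeries.coeff (k / p) (F (fun i => d (a i))) else 0)
    (Phi : (Fin s → ℤ_[p]) → PowerSeries ℤ_[p])
    (hPhi : ∀ a, F a = Phi a * Fp a)
    (hCong : ∀ a, ∀ n : ℕ, 1 ≤ n → ∀ k : ℕ,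
      (p : ℤ_[p]) ^ n ∣ PowerSeries.coeff k
        (Phi a * ((PowerSeries.trunc (p ^ n) (Fp a) : Polynomial ℤ_[p]) : PowerSeries ℤ_[p])
          - ((PowerSeries.trunc (p ^ n) (F a) : Polynomial ℤ_[p]) : PowerSeries ℤ_[p])))
    (a : Fin s → ℤ_[p]) (n : ℕ) (hn : 1 ≤ n) :
    Polynomial.C (p : ℤ_[p]) ∣
      (PowerSeries.trunc (p ^ n) (F a)
        - ∏ i ∈ Finset.range n,
            (PowerSeries.trunc p (F (fun j => d^[i] (a j)))) ^ (p ^ i)) := by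
  have hp : p.Prime := Fact.out
  have hp0 : 0 < p := hp.pos
  set φ : ℤ_[p] →+* ZMod p := PadicInt.toZMod with hφdef
  have hker : ∀ x : ℤ_[p], φ x = 0 ↔ (p : ℤ_[p]) ∣ x := by
    intro x
    rw [hφdef, ← RingHom.mem_ker, PadicInt.ker_toZMod, PadicInt.maximalIdeal_eq_span_p,
      Ideal.mem_span_singleton]
  -- constant term of F is 1
  have hF0 : ∀ b, PowerSeries.coeff 0 (F b) = 1 := by
    intro b
    have h := hF b 0
    simpa [ascPochhammer_zero] using h
  -- map of a coerced polynomial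
  have hmapcoe : ∀ q : Polynomial ℤ_[p],
      PowerSeries.map φ (q : PowerSeries ℤ_[p])
        = ((q.map φ : Polynomial (ZMod p)) : PowerSeries (ZMod p)) := by
    intro q
    ext k
    simp [PowerSeries.coeff_map, Polynomial.coeff_coe, Polynomial.coeff_map]
  -- Phi b mod p equals the truncation of F b below p
  have hPhiMod : ∀ b, PowerSeries.map φ (Phi b)
      = (((PowerSeries.trunc p (F b)).map φ : Polynomial (ZMod p)) : PowerSeries (ZMod p)) := by
    intro b
    have h1 : (PowerSeries.trunc (p ^ 1) (Fp b) : Polynomial ℤ_[p]) = 1 := by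
      ext k
      rw [PowerSeries.coeff_trunc, pow_one]
      rcases eq_or_ne k 0 with rfl | hk
      · simp [hFp b 0, hF0, hp0, Polynomial.coeff_one]
      · rcases lt_or_ge k p with hlt | hle
        · have hnd : ¬ p ∣ k := fun h => hk (Nat.eq_zero_of_dvd_of_lt h hlt)
          simp [hlt, hFp b k, hnd, Polynomial.coeff_one, hk]
        · simp [Nat.not_lt.mpr hle, Polynomial.coeff_one, hk]
    have h2 : PowerSeries.map φ
        (Phi b * ((PowerSeries.trunc (p ^ 1) (Fp b) : Polynomial ℤ_[p]) : PowerSeries ℤ_[p])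
          - ((PowerSeries.trunc (p ^ 1) (F b) : Polynomial ℤ_[p]) : PowerSeries ℤ_[p])) = 0 := by
      ext k
      rw [PowerSeries.coeff_map]
      have hdv := hCong b 1 le_rfl k
      rw [pow_one ((p : ℤ_[p]))] at hdv
      simpa using (hker _).mpr hdv
    rw [map_sub, map_mul, sub_eq_zero, hmapcoe, hmapcoe, h1, Polynomial.map_one,
      Polynomial.coe_one, mul_one] at h2
    simpa [pow_one] using h2
  -- Frobenius: trunc of Fp is the p-th power of trunc of F (d ∘ b), mod p
  have hFrob : ∀ b (m : ℕ),
      (PowerSeries.trunc (p ^ (m + 1)) (Fp b)).map φ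
        = ((PowerSeries.trunc (p ^ m) (F (fun j => d (b j)))).map φ) ^ p := by
    intro b m
    have hexp : (PowerSeries.trunc (p ^ (m + 1)) (Fp b)).map φ
        = Polynomial.expand (ZMod p) p
            ((PowerSeries.trunc (p ^ m) (F (fun j => d (b j)))).map φ) := by
      ext k
      rw [Polynomial.coeff_map, Polynomial.coeff_expand hp0, PowerSeries.coeff_trunc]
      by_cases hdvd : p ∣ k
      · have hiff : k < p ^ (m + 1) ↔ k / p < p ^ m := by
          rw [Nat.div_lt_iff_lt_mul hp0, ← pow_succ]
        by_cases hlt : k / p < p ^ m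
        · simp [hdvd, hFp b k, Polynomial.coeff_map, PowerSeries.coeff_trunc, hlt, hiff.mpr hlt]
        · simp [hdvd, hFp b k, Polynomial.coeff_map, PowerSeries.coeff_trunc, hlt,
            show ¬ k < p ^ (m + 1) from fun h => hlt (hiff.mp h)]
      · simp [hdvd, hFp b k]
    rw [hexp]
    exact ZMod.expand_card _
  -- main induction
  have key : ∀ m, 1 ≤ m → ∀ b : Fin s → ℤ_[p],
      (PowerSeries.trunc (p ^ m) (F b)).map φ
        = ∏ i ∈ Finset.range m,
            ((PowerSeries.trunc p (F (fun j => d^[i] (b j)))).map φ) ^ (p ^ i) := by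
    intro m hm
    induction m, hm using Nat.le_induction with
    | base =>
      intro b
      simp [pow_one]
    | succ m hm ih =>
      intro b
      -- congruence at level m+1
      have hc : PowerSeries.map φ
          (Phi b * ((PowerSeries.trunc (p ^ (m + 1)) (Fp b) : Polynomial ℤ_[p]) :
              PowerSeries ℤ_[p])
            - ((PowerSeries.trunc (p ^ (m + 1)) (F b) : Polynomial ℤ_[p]) :
              PowerSeries ℤ_[p])) = 0 := by
        ext k
        rw [PowerSeries.coeff_map]
        have hdvd : (p : ℤ_[p]) ∣ PowerSeries.coeff k
            (Phi b * ((PowerSeries.trunc (p ^ (m + 1)) (Fp b) : Polynomial ℤ_[p]) :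
                PowerSeries ℤ_[p])
              - ((PowerSeries.trunc (p ^ (m + 1)) (F b) : Polynomial ℤ_[p]) :
                PowerSeries ℤ_[p])) :=
          dvd_trans (dvd_pow_self _ (Nat.succ_ne_zero m)) (hCong b (m + 1) (Nat.le_add_left 1 m) k)
        simpa using (hker _).mpr hdvd
      rw [map_sub, map_mul, sub_eq_zero, hmapcoe, hmapcoe, hPhiMod, hFrob b m] at hc
      have hpoly : (PowerSeries.trunc (p ^ (m + 1)) (F b)).map φ
          = (PowerSeries.trunc p (F b)).map φ
              * ((PowerSeries.trunc (p ^ m) (F (fun j => d (b j)))).map φ) ^ p := by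
        rw [← Polynomial.coe_inj, Polynomial.coe_mul]
        exact hc.symm
      rw [hpoly, ih (fun j => d (b j))]
      rw [Finset.prod_range_succ']
      have hQ0 : (fun j => d^[0] (b j)) = b := by funext j; simp
      rw [hQ0, pow_zero, pow_one, mul_comm]
      congr 1
      rw [← Finset.prod_pow]
      apply Finset.prod_congr rfl
      intro i _
      have : (fun j => d^[i] (d (b j))) = fun j => d^[i + 1] (b j) := by
        funext j; rw [Function.iterate_succ_apply]
      rw [this, ← pow_mul, ← pow_succ]
  -- conclude
  rw [Polynomial.C_dvd_iff_dvd_coeff]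
  intro k
  rw [← hker]
  have hmap0 : (PowerSeries.trunc (p ^ n) (F a)
      - ∏ i ∈ Finset.range n,
          (PowerSeries.trunc p (F (fun j => d^[i] (a j)))) ^ (p ^ i)).map φ = 0 := by
    rw [Polynomial.map_sub, Polynomial.map_prod]
    simp only [Polynomial.map_pow]
    rw [key n hn a, sub_self]
  rw [← Polynomial.coeff_map, hmap0, Polynomial.coeff_zero]
end
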